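/- arXiv:2205.11033 — 4 statements merged into one kernel-verified Lean document; each statement's English description precedes it below -/
import Mathlib

section
/- Let f : ℝ^n → ℝ be twice differentiable with minimizer x* and minimum value f*. Suppose there is μ > 0 such that for all x, y: f(x) ≥ f(y) + ⟨∇f(y), x - y⟩ + (μ/2)·(x-y)^T ∇²f(y) (x-y), the Hessian ∇²f(y) is positive semidefinite, and ∇f(y) ∈ Range(∇²f(y)) for all y. Then for every x, f(x) - f* ≤ (1/(2μ))·∇f(x)^T (∇²f(x))^† ∇f(x). -/
/-! Apply the hypothesis at the base point `x` and evaluate it at `x*`: this bounds `f x - f*` by the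
concave quadratic `-⟪g, z⟫ - (μ/2) zᵀ H z` in `z = x* - x`. Since `g = H u` with `u = H† g`,
completing the square against the positive semidefinite form `H` bounds that quadratic by
`(1/(2μ)) gᵀ H† g`. -/

open Matrix

/-- `B` is the Moore–Penrose pseudoinverse of `A`. -/
def IsMoorePenrose {m n : ℕ} (A : Matrix (Fin m) (Fin n) ℝ)
    (B : Matrix (Fin n) (Fin m) ℝ) : Prop :=
  A * B * A = A ∧ B * A * B = B ∧ (A * B)ᵀ = A * B ∧ (B * A)ᵀ = B * A

namespace Matrix

variable {ι : Type*} [Fintype ι]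

theorem mulVec_mulVec_eq_self_of_mem_range {κ : Type*} [Fintype κ]
    {A : Matrix ι κ ℝ} {B : Matrix κ ι ℝ} (hABA : A * B * A = A) {v : ι → ℝ}
    (hv : v ∈ LinearMap.range A.mulVecLin) : A *ᵥ (B *ᵥ v) = v := by
  obtain ⟨w, rfl⟩ := hv
  rw [mulVecLin_apply, mulVec_mulVec, mulVec_mulVec, hABA]

theorem PosSemidef.neg_dotProduct_sub_quadratic_le {H : Matrix ι ι ℝ} (hH : H.PosSemidef)
    {μ : ℝ} (hμ : 0 < μ) {g u : ι → ℝ} (hu : H *ᵥ u = g) (z : ι → ℝ) :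
    -(g ⬝ᵥ z) - μ / 2 * (z ⬝ᵥ H *ᵥ z) ≤ 1 / (2 * μ) * (g ⬝ᵥ u) := by
  have hsymm : u ⬝ᵥ H *ᵥ z = g ⬝ᵥ z := by
    rw [dotProduct_mulVec, ← mulVec_transpose, ← conjTranspose_eq_transpose_of_trivial,
      hH.isHermitian.eq, hu]
  have hsq : 0 ≤ μ ^ 2 * (z ⬝ᵥ H *ᵥ z) + 2 * μ * (g ⬝ᵥ z) + g ⬝ᵥ u := by
    have := hH.dotProduct_mulVec_nonneg (μ • z + u)
    simp only [star_trivial, mulVec_add, mulVec_smul, hu, dotProduct_add, add_dotProduct,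
      dotProduct_smul, smul_dotProduct, hsymm, smul_eq_mul, dotProduct_comm z g,
      dotProduct_comm u g] at this
    linarith
  have hgap : 1 / (2 * μ) * (g ⬝ᵥ u) - (-(g ⬝ᵥ z) - μ / 2 * (z ⬝ᵥ H *ᵥ z)) =
      (μ ^ 2 * (z ⬝ᵥ H *ᵥ z) + 2 * μ * (g ⬝ᵥ z) + g ⬝ᵥ u) / (2 * μ) := by
    field_simp
    ring
  linarith [div_nonneg hsq (by positivity : (0 : ℝ) ≤ 2 * μ)]

end Matrix

theorem suboptimality_bound_general {n : ℕ}
    (f : (Fin n → ℝ) → ℝ) (g : (Fin n → ℝ) → (Fin n → ℝ))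
    (Hess Hd : (Fin n → ℝ) → Matrix (Fin n) (Fin n) ℝ)
    (μ : ℝ) (hμ : 0 < μ)
    (hHess : ∀ y, (Hess y).PosSemidef)
    (hHd : ∀ y, IsMoorePenrose (Hess y) (Hd y))
    (hrange : ∀ y, g y ∈ LinearMap.range (Hess y).mulVecLin)
    (hconv : ∀ x y, f x ≥ f y + g y ⬝ᵥ (x - y) + μ / 2 * ((x - y) ⬝ᵥ (Hess y).mulVec (x - y)))
    (xstar : Fin n → ℝ) (fstar : ℝ) (hstar : f xstar = fstar) :
    ∀ x, f x - fstar ≤ (1 / (2 * μ)) * (g x ⬝ᵥ (Hd x).mulVec (g x)) := by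
  intro x
  have hu : Hess x *ᵥ (Hd x *ᵥ g x) = g x :=
    mulVec_mulVec_eq_self_of_mem_range (hHd x).1 (hrange x)
  calc f x - fstar
      ≤ -(g x ⬝ᵥ (xstar - x)) - μ / 2 * ((xstar - x) ⬝ᵥ Hess x *ᵥ (xstar - x)) := by
        linarith [hconv xstar x]
    _ ≤ 1 / (2 * μ) * (g x ⬝ᵥ Hd x *ᵥ g x) :=
        (hHess x).neg_dotProduct_sub_quadratic_le hμ hu (xstar - x)

theorem suboptimality_bound {n : ℕ}
    (f : (Fin n → ℝ) → ℝ) (g : (Fin n → ℝ) → (Fin n → ℝ))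
    (Hess Hd : (Fin n → ℝ) → Matrix (Fin n) (Fin n) ℝ)
    (μ : ℝ) (hμ : 0 < μ)
    (hHess : ∀ y, (Hess y).PosSemidef)
    (hHd : ∀ y, IsMoorePenrose (Hess y) (Hd y))
    (hrange : ∀ y, g y ∈ LinearMap.range (Hess y).mulVecLin)
    (hconv : ∀ x y, f x ≥ f y + g y ⬝ᵥ (x - y) + μ / 2 * ((x - y) ⬝ᵥ (Hess y).mulVec (x - y)))
    (xstar : Fin n → ℝ) (fstar : ℝ) (hstar : f xstar = fstar)
    (hmin : ∀ x, fstar ≤ f x) :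
    ∀ x, f x - fstar ≤ (1 / (2 * μ)) * (g x ⬝ᵥ (Hd x).mulVec (g x)) :=
  suboptimality_bound_general f g Hess Hd μ hμ hHess hHd hrange hconv xstar fstar hstar
end

section
/- Let H be symmetric positive semidefinite, G symmetric positive definite, ρ > 0, and set Y = H^{1/2} G^{-1/2}, K = ((1/ρ)G + H)^{-1}, L = H^{1/2}((1/ρ)I + H^{1/2}G^{-1}H^{1/2})^{-1}H^{1/2}. Then the matrices H^{1/2} K H^{1/2} and G^{-1/2} L G^{-1/2} have the same nonzero eigenvalues; specifically, each nonzero eigenvalue equals ρσ²/(1 + ρσ²) for some nonzero singular value σ of Y. -/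
open Matrix

/-- `t` is an eigenvalue of the matrix `A`. -/
def HasEigen {n : ℕ} (A : Matrix (Fin n) (Fin n) ℝ) (t : ℝ) : Prop :=
  ∃ v : Fin n → ℝ, v ≠ 0 ∧ A.mulVec v = t • v

open scoped ComplexOrder in
/-- The positive semidefinite square root of a positive semidefinite matrix
(the definition `Matrix.PosSemidef.sqrt` of the older Mathlib, since removed). -/
noncomputable def Matrix.PosSemidef.sqrt {n 𝕜 : Type*} [Fintype n] [DecidableEq n] [RCLike 𝕜]
    {A : Matrix n n 𝕜} (hA : A.PosSemidef) : Matrix n n 𝕜 :=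
  hA.1.eigenvectorUnitary.1 * diagonal ((↑) ∘ (√·) ∘ hA.1.eigenvalues) *
  (star hA.1.eigenvectorUnitary : Matrix n n 𝕜)

/-!
Write `S = H^{1/2}`, `R = G^{1/2}` and `Y = S R⁻¹`. Since `ρ⁻¹ G + H = R (ρ⁻¹ + YᵀY) R`, the first
matrix is `Y · (ρ⁻¹ + YᵀY)⁻¹ Yᵀ`, and by the push-through identity
`Yᵀ (ρ⁻¹ + YYᵀ)⁻¹ = (ρ⁻¹ + YᵀY)⁻¹ Yᵀ` the second one is `(ρ⁻¹ + YᵀY)⁻¹ Yᵀ · Y`. These are `AB` and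
`BA`, so they share their nonzero eigenvalues. Finally, an eigenvector of `(ρ⁻¹ + YᵀY)⁻¹ YᵀY` for
`t ≠ 0` is an eigenvector of `YᵀY` for some `σ² > 0`, and then `t = σ² / (ρ⁻¹ + σ²)`.
-/

namespace Matrix.PosSemidef

variable {n 𝕜 : Type*} [Fintype n] [DecidableEq n] [RCLike 𝕜] {A : Matrix n n 𝕜}

open scoped MatrixOrder ComplexOrder

theorem sqrt_eq_cfcSqrt (hA : A.PosSemidef) : hA.sqrt = CFC.sqrt A := by
  rw [CFC.sqrt_eq_cfc, cfc_nnreal_eq_real _ A, hA.1.cfc_eq, IsHermitian.cfc,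
    Unitary.conjStarAlgAut_apply, Matrix.PosSemidef.sqrt]
  simp only [Real.coe_sqrt, Real.coe_toNNReal', Function.comp_def,
    max_eq_left (hA.eigenvalues_nonneg _)]

theorem sqrt_mul_self (hA : A.PosSemidef) : hA.sqrt * hA.sqrt = A :=
  hA.sqrt_eq_cfcSqrt ▸ CFC.sqrt_mul_sqrt_self A hA.nonneg

theorem isHermitian_sqrt (hA : A.PosSemidef) : hA.sqrt.IsHermitian :=
  hA.sqrt_eq_cfcSqrt ▸ (CFC.sqrt_nonneg A).isSelfAdjoint

end Matrix.PosSemidef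

namespace Matrix

theorem mul_inv_smul_one_add_mul_comm {m n α : Type*} [Fintype m] [Fintype n] [DecidableEq m]
    [DecidableEq n] [CommRing α] (A : Matrix m n α) (B : Matrix n m α) (c : α)
    (hAB : IsUnit (c • 1 + A * B).det) (hBA : IsUnit (c • 1 + B * A).det) :
    A * (c • 1 + B * A)⁻¹ = (c • 1 + A * B)⁻¹ * A := by
  have hcomm : (c • 1 + A * B) * A = A * (c • 1 + B * A) := by
    simp only [Matrix.add_mul, Matrix.mul_add, Matrix.smul_mul, Matrix.mul_smul, Matrix.one_mul,
      Matrix.mul_one, Matrix.mul_assoc]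
  calc A * (c • 1 + B * A)⁻¹
      = (c • 1 + A * B)⁻¹ * ((c • 1 + A * B) * A) * (c • 1 + B * A)⁻¹ := by
        rw [nonsing_inv_mul_cancel_left _ _ hAB]
    _ = (c • 1 + A * B)⁻¹ * A := by
        rw [hcomm, ← Matrix.mul_assoc, mul_nonsing_inv_cancel_right _ _ hBA]

theorem posDef_smul_one_add_transpose_mul {m n : Type*} [Fintype m] [Fintype n] [DecidableEq n]
    (A : Matrix m n ℝ) {c : ℝ} (hc : 0 < c) : (c • 1 + Aᵀ * A).PosDef := by
  simpa only [conjTranspose_eq_transpose_of_trivial] using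
    (PosDef.one.smul hc).add_posSemidef (posSemidef_conjTranspose_mul_self A)

theorem transpose_mul_inv_smul_one_add_mul_transpose {m n : Type*} [Fintype m] [Fintype n]
    [DecidableEq m] [DecidableEq n] (A : Matrix m n ℝ) {c : ℝ} (hc : 0 < c) :
    Aᵀ * (c • 1 + A * Aᵀ)⁻¹ = (c • 1 + Aᵀ * A)⁻¹ * Aᵀ := by
  have hpos := posDef_smul_one_add_transpose_mul Aᵀ hc
  rw [transpose_transpose] at hpos
  exact mul_inv_smul_one_add_mul_comm Aᵀ A c
    (posDef_smul_one_add_transpose_mul A hc).det_pos.ne'.isUnit hpos.det_pos.ne'.isUnit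

theorem mul_inv_smul_add_mul_eq_of_mul_self_eq {n α : Type*} [Fintype n] [DecidableEq n]
    [CommRing α] {G H R S : Matrix n n α} (hRR : R * R = G) (hSS : S * S = H)
    (hR : IsUnit R.det) (hRt : Rᵀ = R) (hSt : Sᵀ = S) (c : α) :
    S * (c • G + H)⁻¹ * S =
      (S * R⁻¹) * ((c • 1 + (S * R⁻¹)ᵀ * (S * R⁻¹))⁻¹ * (S * R⁻¹)ᵀ) := by
  have hYt : (S * R⁻¹)ᵀ = R⁻¹ * S := by rw [transpose_mul, transpose_nonsing_inv, hRt, hSt]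
  have hfactor : c • G + H = R * (c • 1 + (S * R⁻¹)ᵀ * (S * R⁻¹)) * R := by
    rw [hYt, ← hRR, ← hSS]
    simp only [Matrix.mul_add, Matrix.add_mul, Matrix.mul_smul, Matrix.smul_mul, Matrix.mul_one,
      Matrix.mul_assoc, nonsing_inv_mul _ hR, mul_nonsing_inv_cancel_left _ _ hR]
  rw [hfactor, Matrix.mul_inv_rev, Matrix.mul_inv_rev, hYt]
  simp only [Matrix.mul_assoc]

theorem inv_mul_mul_inv_mul_eq_of_mul_self_eq {n : Type*} [Fintype n] [DecidableEq n]
    {G R S : Matrix n n ℝ} (hRR : R * R = G) (hRt : Rᵀ = R) (hSt : Sᵀ = S) {c : ℝ}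
    (hc : 0 < c) :
    R⁻¹ * (S * (c • 1 + S * G⁻¹ * S)⁻¹ * S) * R⁻¹ =
      (c • 1 + (S * R⁻¹)ᵀ * (S * R⁻¹))⁻¹ * (S * R⁻¹)ᵀ * (S * R⁻¹) := by
  have hYt : (S * R⁻¹)ᵀ = R⁻¹ * S := by rw [transpose_mul, transpose_nonsing_inv, hRt, hSt]
  rw [← transpose_mul_inv_smul_one_add_mul_transpose _ hc, hYt, ← hRR, Matrix.mul_inv_rev]
  simp only [Matrix.mul_assoc]

end Matrix

section HasEigen

variable {n : ℕ}

theorem HasEigen.mul_comm {A B : Matrix (Fin n) (Fin n) ℝ} {t : ℝ} (ht : t ≠ 0)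
    (h : HasEigen (A * B) t) : HasEigen (B * A) t := by
  obtain ⟨v, hv, hABv⟩ := h
  refine ⟨B *ᵥ v, fun hBv => hv ?_, ?_⟩
  · have htv : t • v = 0 := by rw [← hABv, ← mulVec_mulVec, hBv, mulVec_zero]
    exact (smul_eq_zero.1 htv).resolve_left ht
  · rw [mulVec_mulVec, Matrix.mul_assoc, ← mulVec_mulVec, hABv, mulVec_smul]

theorem hasEigen_mul_comm {A B : Matrix (Fin n) (Fin n) ℝ} {t : ℝ} (ht : t ≠ 0) :
    HasEigen (A * B) t ↔ HasEigen (B * A) t :=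
  ⟨HasEigen.mul_comm ht, HasEigen.mul_comm ht⟩

theorem Matrix.PosSemidef.nonneg_of_hasEigen {C : Matrix (Fin n) (Fin n) ℝ} (hC : C.PosSemidef)
    {l : ℝ} (h : HasEigen C l) : 0 ≤ l := by
  obtain ⟨v, hv, hCv⟩ := h
  have hquad := hC.dotProduct_mulVec_nonneg v
  rw [hCv, star_trivial, dotProduct_smul, smul_eq_mul] at hquad
  exact nonneg_of_mul_nonneg_left hquad (by simpa using dotProduct_self_star_pos_iff.2 hv)

theorem Matrix.PosSemidef.exists_hasEigen_of_hasEigen_inv_smul_one_add_mul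
    {C : Matrix (Fin n) (Fin n) ℝ} (hC : C.PosSemidef) {c t : ℝ} (hc : 0 < c) (ht : t ≠ 0)
    (h : HasEigen ((c • 1 + C)⁻¹ * C) t) : ∃ l, 0 < l ∧ HasEigen C l ∧ t = l / (c + l) := by
  obtain ⟨v, hv, hv_eq⟩ := h
  have hunit : IsUnit (c • 1 + C).det :=
    ((PosDef.one.smul hc).add_posSemidef hC).det_pos.ne'.isUnit
  have hCv : C *ᵥ v = t • (c • v + C *ᵥ v) :=
    calc C *ᵥ v = (c • 1 + C) *ᵥ (((c • 1 + C)⁻¹ * C) *ᵥ v) := by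
          rw [mulVec_mulVec, mul_nonsing_inv_cancel_left _ _ hunit]
      _ = t • (c • v + C *ᵥ v) := by
          rw [hv_eq, mulVec_smul, add_mulVec, smul_mulVec, one_mulVec]
  have ht1 : 1 - t ≠ 0 := by
    intro h1
    rw [show t = 1 by linarith, one_smul, right_eq_add, smul_eq_zero] at hCv
    exact hv (hCv.resolve_left hc.ne')
  set l := t * c / (1 - t) with hl
  have hCl : C *ᵥ v = l • v := by
    ext i
    have hi := congrFun hCv i
    simp only [Pi.smul_apply, Pi.add_apply, smul_eq_mul] at hi ⊢
    rw [hl, div_mul_eq_mul_div, eq_div_iff ht1]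
    linear_combination hi
  have hl0 : l ≠ 0 := div_ne_zero (mul_ne_zero ht hc.ne') ht1
  have hlpos : 0 < l := (hC.nonneg_of_hasEigen ⟨v, hv, hCl⟩).lt_of_ne' hl0
  refine ⟨l, hlpos, ⟨v, hv, hCl⟩, ?_⟩
  rw [hl]
  field_simp
  ring

end HasEigen

theorem same_nonzero_eigenvalues {n : ℕ} (H G : Matrix (Fin n) (Fin n) ℝ)
    (hH : H.PosSemidef) (hG : G.PosDef) (ρ : ℝ) (hρ : 0 < ρ) :
    ∀ t : ℝ, t ≠ 0 →
      ((HasEigen (hH.sqrt * (ρ⁻¹ • G + H)⁻¹ * hH.sqrt) t ↔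
        HasEigen ((hG.posSemidef.sqrt)⁻¹ *
          (hH.sqrt * (ρ⁻¹ • (1 : Matrix (Fin n) (Fin n) ℝ) + hH.sqrt * G⁻¹ * hH.sqrt)⁻¹ * hH.sqrt) *
          (hG.posSemidef.sqrt)⁻¹) t) ∧
      (HasEigen (hH.sqrt * (ρ⁻¹ • G + H)⁻¹ * hH.sqrt) t →
        ∃ s : ℝ, 0 < s ∧
          HasEigen ((hH.sqrt * (hG.posSemidef.sqrt)⁻¹)ᵀ * (hH.sqrt * (hG.posSemidef.sqrt)⁻¹)) (s ^ 2) ∧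
          t = ρ * s ^ 2 / (1 + ρ * s ^ 2))) := by
  intro t ht
  have hRR := hG.posSemidef.sqrt_mul_self
  have hRt : (hG.posSemidef.sqrt)ᵀ = hG.posSemidef.sqrt := hG.posSemidef.isHermitian_sqrt
  have hSt : (hH.sqrt)ᵀ = hH.sqrt := hH.isHermitian_sqrt
  have hR : IsUnit (hG.posSemidef.sqrt).det :=
    (IsUnit.mul_iff.1 (by rw [← det_mul, hRR]; exact hG.det_pos.ne'.isUnit)).1
  have hc : 0 < ρ⁻¹ := inv_pos.2 hρ
  rw [mul_inv_smul_add_mul_eq_of_mul_self_eq hRR hH.sqrt_mul_self hR hRt hSt,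
    inv_mul_mul_inv_mul_eq_of_mul_self_eq hRR hRt hSt hc]
  refine ⟨hasEigen_mul_comm ht, fun h => ?_⟩
  rw [hasEigen_mul_comm ht, Matrix.mul_assoc] at h
  obtain ⟨l, hl, hCl, rfl⟩ :=
    (posSemidef_conjTranspose_mul_self _).exists_hasEigen_of_hasEigen_inv_smul_one_add_mul hc ht h
  refine ⟨√l, Real.sqrt_pos.2 hl, by rwa [Real.sq_sqrt hl.le], ?_⟩
  rw [Real.sq_sqrt hl.le]
  field_simp
end

section
/- Let H be symmetric positive semidefinite, G symmetric positive definite, ρ > 0, K = ((1/ρ)G + H)^{-1}. Define ξ = λ_min^+(H^{1/2} K H^{1/2}), the smallest nonzero eigenvalue (with ξ interpreted appropriately if H = 0). Then for every vector g ∈ Range(H): g^T K g ≥ ξ · g^T H^† g. -/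
open Matrix

/-- The smallest nonzero eigenvalue of a matrix. -/
noncomputable def lambdaMinPos {n : ℕ} (A : Matrix (Fin n) (Fin n) ℝ) : ℝ :=
  sInf {t : ℝ | t ≠ 0 ∧ HasEigen A t}

/-- The square root of a positive semidefinite matrix, as `Matrix.PosSemidef.sqrt` was defined
in the older Mathlib. -/
noncomputable def posSemidefSqrt {n : ℕ} {A : Matrix (Fin n) (Fin n) ℝ} (hA : A.PosSemidef) :
    Matrix (Fin n) (Fin n) ℝ :=
  hA.1.eigenvectorUnitary.1 * diagonal ((↑) ∘ (√·) ∘ hA.1.eigenvalues) *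
    (star hA.1.eigenvectorUnitary : Matrix (Fin n) (Fin n) ℝ)


/-!
Write `S = H^{1/2}` and `g = H x = S (S x)`, and put `w = S x`. Then `gᵀ K g = wᵀ (S K S) w`,
and `H H^† H = H` gives `gᵀ H^† g = xᵀ H x = wᵀ w`. Since `K` is positive definite,
`ker (S K S) = ker S`, which is orthogonal to `w = S x`. Hence, in an orthonormal eigenbasis of
the symmetric matrix `S K S`, `w` has no component along eigenvalue `0`, and every other
eigenvalue is at least `ξ`.
-/

variable {ι : Type*} [Fintype ι] {n : ℕ}

namespace Matrix

theorem IsHermitian.dotProduct_mulVec_comm {A : Matrix ι ι ℝ} (hA : A.IsHermitian)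
    (x y : ι → ℝ) : x ⬝ᵥ A *ᵥ y = (A *ᵥ x) ⬝ᵥ y := by
  rw [dotProduct_mulVec, ← mulVec_transpose, ← conjTranspose_eq_transpose_of_trivial, hA.eq]

theorem IsHermitian.dotProduct_mulVec_conj {S : Matrix ι ι ℝ} (hS : S.IsHermitian)
    (M : Matrix ι ι ℝ) (x y : ι → ℝ) :
    (S *ᵥ x) ⬝ᵥ M *ᵥ (S *ᵥ y) = x ⬝ᵥ (S * M * S) *ᵥ y := by
  rw [← hS.dotProduct_mulVec_comm, mulVec_mulVec, mulVec_mulVec]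

theorem PosDef.mulVec_eq_zero_of_conj_mulVec_eq_zero {K S : Matrix ι ι ℝ} (hK : K.PosDef)
    (hS : S.IsHermitian) {v : ι → ℝ} (hv : (S * K * S) *ᵥ v = 0) : S *ᵥ v = 0 := by
  by_contra hSv
  have hpos := hK.dotProduct_mulVec_pos hSv
  rw [star_trivial, hS.dotProduct_mulVec_conj, hv, dotProduct_zero] at hpos
  exact hpos.false

end Matrix

theorem OrthonormalBasis.dotProduct_eq_sum_mul
    (b : OrthonormalBasis ι ℝ (EuclideanSpace ℝ ι)) (x y : ι → ℝ) :
    x ⬝ᵥ y = ∑ i, (⇑(b i) ⬝ᵥ x) * (⇑(b i) ⬝ᵥ y) := by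
  have := b.sum_inner_mul_inner (WithLp.toLp 2 x) (WithLp.toLp 2 y)
  simp only [EuclideanSpace.inner_eq_star_dotProduct, star_trivial] at this
  rw [dotProduct_comm, ← this]
  exact Finset.sum_congr rfl fun i _ => by rw [dotProduct_comm y]

theorem HasEigen.mem_spectrum {A : Matrix (Fin n) (Fin n) ℝ} {t : ℝ} (h : HasEigen A t) :
    t ∈ spectrum ℝ A := by
  obtain ⟨v, hv0, hv⟩ := h
  rw [← spectrum_toLin', ← Module.End.hasEigenvalue_iff_mem_spectrum]
  exact Module.End.hasEigenvalue_of_hasEigenvector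
    ⟨Module.End.mem_eigenspace_iff.2 (by simpa using hv), hv0⟩

theorem lambdaMinPos_le {A : Matrix (Fin n) (Fin n) ℝ} {t : ℝ} (ht : t ≠ 0) (h : HasEigen A t) :
    lambdaMinPos A ≤ t :=
  csInf_le (A.finite_real_spectrum.bddBelow.mono fun _ hs => hs.2.mem_spectrum) ⟨ht, h⟩

theorem Matrix.IsHermitian.hasEigen_eigenvalues {A : Matrix (Fin n) (Fin n) ℝ}
    (hA : A.IsHermitian) (i : Fin n) : HasEigen A (hA.eigenvalues i) :=
  ⟨⇑(hA.eigenvectorBasis i), fun h => hA.eigenvectorBasis.orthonormal.ne_zero i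
    (by ext j; simpa using congrFun h j), hA.mulVec_eigenvectorBasis i⟩

theorem Matrix.IsHermitian.lambdaMinPos_mul_dotProduct_self_le {A : Matrix (Fin n) (Fin n) ℝ}
    (hA : A.IsHermitian) {w : Fin n → ℝ} (hw : ∀ v, A *ᵥ v = 0 → v ⬝ᵥ w = 0) :
    lambdaMinPos A * (w ⬝ᵥ w) ≤ w ⬝ᵥ A *ᵥ w := by
  set b := hA.eigenvectorBasis
  set c : Fin n → ℝ := fun i => ⇑(b i) ⬝ᵥ w
  have hAc : ∀ i, ⇑(b i) ⬝ᵥ A *ᵥ w = hA.eigenvalues i * c i := fun i => by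
    rw [hA.dotProduct_mulVec_comm, hA.mulVec_eigenvectorBasis, smul_dotProduct, smul_eq_mul]
  rw [b.dotProduct_eq_sum_mul w w, b.dotProduct_eq_sum_mul w (A *ᵥ w), Finset.mul_sum]
  refine Finset.sum_le_sum fun i _ => ?_
  rw [hAc]
  by_cases hi : hA.eigenvalues i = 0
  · have hci : c i = 0 := hw _ (by rw [hA.mulVec_eigenvectorBasis, hi, zero_smul])
    simp [c, hci]
  · have := lambdaMinPos_le hi (hA.hasEigen_eigenvalues i)
    change lambdaMinPos A * (c i * c i) ≤ c i * (hA.eigenvalues i * c i)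
    nlinarith [mul_self_nonneg (c i)]

theorem IsMoorePenrose.dotProduct_mulVec_mulVec {A B : Matrix (Fin n) (Fin n) ℝ}
    (hA : A.IsHermitian) (hAB : IsMoorePenrose A B) (x : Fin n → ℝ) :
    (A *ᵥ x) ⬝ᵥ B *ᵥ (A *ᵥ x) = x ⬝ᵥ A *ᵥ x := by
  rw [hA.dotProduct_mulVec_conj, hAB.1]

theorem posSemidefSqrt_posSemidef {A : Matrix (Fin n) (Fin n) ℝ} (hA : A.PosSemidef) :
    (posSemidefSqrt hA).PosSemidef := by
  refine PosSemidef.mul_mul_conjTranspose_same ?_ hA.1.eigenvectorUnitary.1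
  rw [posSemidef_diagonal_iff]
  exact fun i => by simp [Real.sqrt_nonneg]

theorem posSemidefSqrt_mul_self {A : Matrix (Fin n) (Fin n) ℝ} (hA : A.PosSemidef) :
    posSemidefSqrt hA * posSemidefSqrt hA = A := by
  set U : Matrix (Fin n) (Fin n) ℝ := hA.1.eigenvectorUnitary.1
  set D : Matrix (Fin n) (Fin n) ℝ := diagonal ((↑) ∘ (√·) ∘ hA.1.eigenvalues)
  have hUU : star U * U = 1 := Unitary.coe_star_mul_self _
  have hDD : D * D = diagonal (RCLike.ofReal ∘ hA.1.eigenvalues) := by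
    rw [diagonal_mul_diagonal]
    congr 1; funext i
    simp [Real.mul_self_sqrt (hA.eigenvalues_nonneg i)]
  conv_rhs => rw [hA.1.spectral_theorem, Unitary.conjStarAlgAut_apply]
  calc U * D * star U * (U * D * star U) = U * D * (star U * U) * D * star U := by
        simp only [Matrix.mul_assoc]
    _ = _ := by rw [hUU, Matrix.mul_one, Matrix.mul_assoc U D D, hDD]

theorem K_lower_bound_via_pinv_general {n : ℕ} (H G Hd : Matrix (Fin n) (Fin n) ℝ)
    (hH : H.PosSemidef) (hG : G.PosDef) (ρ : ℝ) (hρ : 0 < ρ)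
    (hHd : IsMoorePenrose H Hd)
    (g : Fin n → ℝ) (hg : g ∈ LinearMap.range H.mulVecLin) :
    g ⬝ᵥ ((ρ⁻¹ • G + H)⁻¹).mulVec g ≥
      lambdaMinPos (posSemidefSqrt hH * (ρ⁻¹ • G + H)⁻¹ * posSemidefSqrt hH) * (g ⬝ᵥ Hd.mulVec g) := by
  obtain ⟨x, rfl⟩ := hg
  set S := posSemidefSqrt hH
  set K := (ρ⁻¹ • G + H)⁻¹
  have hS : S.IsHermitian := (posSemidefSqrt_posSemidef hH).1
  have hSS : S * S = H := posSemidefSqrt_mul_self hH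
  have hK : K.PosDef := ((hG.smul (inv_pos.2 hρ)).add_posSemidef hH).inv
  have hSKS : (S * K * S).IsHermitian := by
    simpa only [hS.eq] using isHermitian_mul_mul_conjTranspose S hK.1
  have hHd_quad : (H *ᵥ x) ⬝ᵥ Hd *ᵥ (H *ᵥ x) = (S *ᵥ x) ⬝ᵥ (S *ᵥ x) := by
    rw [hHd.dotProduct_mulVec_mulVec hH.1, ← hSS, ← mulVec_mulVec, hS.dotProduct_mulVec_comm]
  have hK_quad : (H *ᵥ x) ⬝ᵥ K *ᵥ (H *ᵥ x) = (S *ᵥ x) ⬝ᵥ (S * K * S) *ᵥ (S *ᵥ x) := by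
    rw [← hSS, ← mulVec_mulVec, hS.dotProduct_mulVec_conj]
  rw [mulVecLin_apply, ge_iff_le, hHd_quad, hK_quad]
  refine hSKS.lambdaMinPos_mul_dotProduct_self_le fun v hv => ?_
  rw [hS.dotProduct_mulVec_comm, hK.mulVec_eq_zero_of_conj_mulVec_eq_zero hS hv, zero_dotProduct]

theorem K_lower_bound_via_pinv {n : ℕ} (H G Hd : Matrix (Fin n) (Fin n) ℝ)
    (hH : H.PosSemidef) (hHne : H ≠ 0) (hG : G.PosDef) (ρ : ℝ) (hρ : 0 < ρ)
    (hHd : IsMoorePenrose H Hd)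
    (g : Fin n → ℝ) (hg : g ∈ LinearMap.range H.mulVecLin) :
    g ⬝ᵥ ((ρ⁻¹ • G + H)⁻¹).mulVec g ≥
      lambdaMinPos (posSemidefSqrt hH * (ρ⁻¹ • G + H)⁻¹ * posSemidefSqrt hH) * (g ⬝ᵥ Hd.mulVec g) :=
  K_lower_bound_via_pinv_general H G Hd hH hG ρ hρ hHd g hg
end

section
/- Let f(x) = (1/m)Σ_{i=1}^m φ_i(a_i^T x) + (α/2)‖x‖² with α > 0, a_i ∈ ℝ^n, and φ_i twice differentiable with u ≤ φ_i''(t) ≤ ℓ for all t, where 0 ≤ u ≤ ℓ. Then for all x, y: (μ/2)(x−y)^T ∇²f(y)(x−y) ≤ f(x) − f(y) − ⟨∇f(y), x−y⟩ ≤ (L/2)(x−y)^T ∇²f(y)(x−y), with L = (ℓσ_max²(A) + mα)/(uσ_max²(A) + mα) and μ = (uσ_max²(A) + mα)/(ℓσ_max²(A) + mα), where A = [a_1,...,a_m] and σ_max(A) is its largest singular value. -/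
open Matrix Finset

/-!
Write `d = x - y` and `S = Σᵢ (aᵢ ⬝ d)²`. Since `u ≤ φᵢ'' ≤ ℓ`, the Bregman remainder of each ridge
term `φᵢ(aᵢ ⬝ ·)` lies between `u (aᵢ ⬝ d)² / 2` and `ℓ (aᵢ ⬝ d)² / 2`, and so does half its Hessian
term. Hence twice the Bregman divergence of `f` and `dᵀ ∇²f(y) d` both lie in
`[u S / m + α ‖d‖², ℓ S / m + α ‖d‖²]`. As `S = dᵀ A Aᵀ d ≤ σ_max² ‖d‖²`, the ratio of the endpoints
is at most `L = 1 / μ`, so each of the two quantities is within a factor `L` of the other.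
-/

theorem Monotone.add_mul_sub_le_of_hasDerivAt {g g' : ℝ → ℝ}
    (hg : ∀ t, HasDerivAt g (g' t) t) (hg' : Monotone g') (x y : ℝ) :
    g x + g' x * (y - x) ≤ g y := by
  have hconv : ConvexOn ℝ Set.univ g :=
    Monotone.convexOn_univ_of_deriv (fun t => (hg t).differentiableAt)
      ((funext fun t => (hg t).deriv) ▸ hg')
  rcases lt_trichotomy x y with hxy | rfl | hxy
  · have := hconv.le_slope_of_hasDerivAt trivial trivial hxy (hg x)
    rw [slope_def_field, le_div_iff₀ (sub_pos.2 hxy)] at this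
    linarith
  · simp
  · have := hconv.slope_le_of_hasDerivAt trivial trivial hxy (hg x)
    rw [slope_def_field, div_le_iff₀ (sub_pos.2 hxy)] at this
    linarith

section Taylor

variable {ψ ψ' ψ'' : ℝ → ℝ} (hψ : ∀ t, HasDerivAt ψ (ψ' t) t)
  (hψ' : ∀ t, HasDerivAt ψ' (ψ'' t) t)
include hψ hψ'

theorem mul_sq_div_two_le_of_le_deriv2 {u : ℝ} (hu : ∀ t, u ≤ ψ'' t) (x y : ℝ) :
    u * (y - x) ^ 2 / 2 ≤ ψ y - ψ x - ψ' x * (y - x) := by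
  have hg' (t : ℝ) : HasDerivAt (fun t => ψ' t - u * t) (ψ'' t - u) t := by
    simpa using (hψ' t).fun_sub ((hasDerivAt_id t).const_mul u)
  have hg (t : ℝ) : HasDerivAt (fun t => ψ t - u * t ^ 2 / 2) (ψ' t - u * t) t := by
    refine ((hψ t).fun_sub (((hasDerivAt_pow 2 t).const_mul u).div_const 2)).congr_deriv ?_
    push_cast
    ring
  have hmono : Monotone fun t => ψ' t - u * t :=
    monotone_of_deriv_nonneg (fun t => (hg' t).differentiableAt)
      fun t => (hg' t).deriv ▸ sub_nonneg.2 (hu t)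
  linear_combination hmono.add_mul_sub_le_of_hasDerivAt hg x y

theorem sub_sub_mul_le_of_deriv2_le {ℓ : ℝ} (hℓ : ∀ t, ψ'' t ≤ ℓ) (x y : ℝ) :
    ψ y - ψ x - ψ' x * (y - x) ≤ ℓ * (y - x) ^ 2 / 2 := by
  linear_combination mul_sq_div_two_le_of_le_deriv2 (fun t => (hψ t).fun_neg)
    (fun t => (hψ' t).fun_neg) (fun t => neg_le_neg (hℓ t)) x y

end Taylor

namespace Matrix

variable {ι κ : Type*} [Fintype ι] [Fintype κ]

theorem PosSemidef.nonneg_of_mulVec_eq_smul {M : Matrix ι ι ℝ} (hM : M.PosSemidef)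
    {v : ι → ℝ} {t : ℝ} (hv : v ≠ 0) (h : M *ᵥ v = t • v) : 0 ≤ t := by
  have := hM.dotProduct_mulVec_nonneg v
  rw [h, dotProduct_smul, smul_eq_mul] at this
  exact (mul_nonneg_iff_of_pos_right (dotProduct_star_self_pos_iff.2 hv)).1 this

open scoped MatrixOrder in
theorem IsHermitian.dotProduct_mulVec_le [DecidableEq ι] {M : Matrix ι ι ℝ} (hM : M.IsHermitian)
    {s : ℝ} (hs : s ∈ upperBounds {t | ∃ v : ι → ℝ, v ≠ 0 ∧ M *ᵥ v = t • v}) (d : ι → ℝ) :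
    d ⬝ᵥ M *ᵥ d ≤ s * (d ⬝ᵥ d) := by
  have hle : M ≤ algebraMap ℝ _ s := by
    refine le_algebraMap_of_spectrum_le (fun t ht => hs ?_) hM.isSelfAdjoint
    obtain ⟨i, rfl⟩ := hM.spectrum_real_eq_range_eigenvalues ▸ ht
    exact ⟨_, fun h => hM.eigenvectorBasis.orthonormal.ne_zero i (by ext j; exact congrFun h j),
      hM.mulVec_eigenvectorBasis i⟩
  simpa only [Algebra.algebraMap_eq_smul_one, sub_mulVec, smul_mulVec, one_mulVec, dotProduct_sub,
    dotProduct_smul, smul_eq_mul, sub_nonneg, star_trivial]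
    using (Matrix.le_iff.mp hle).dotProduct_mulVec_nonneg d

theorem posSemidef_mul_transpose_self (A : Matrix κ ι ℝ) : (A * Aᵀ).PosSemidef := by
  simpa [conjTranspose_eq_transpose_of_trivial] using posSemidef_self_mul_conjTranspose A

theorem dotProduct_mul_transpose_mulVec {R : Type*} [CommSemiring R] (A : Matrix κ ι R)
    (w : κ → R) : w ⬝ᵥ (A * Aᵀ) *ᵥ w = Aᵀ *ᵥ w ⬝ᵥ Aᵀ *ᵥ w := by
  rw [← mulVec_mulVec, dotProduct_mulVec, ← mulVec_transpose]

end Matrix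

theorem sum_sq_dotProduct_le {ι κ : Type*} [Fintype ι] [Fintype κ] {a : ι → κ → ℝ} {σ : ℝ}
    (hσ : σ ∈ upperBounds {t | ∃ v : κ → ℝ, v ≠ 0 ∧
      ((of fun j i => a i j : Matrix κ ι ℝ) * (of fun j i => a i j : Matrix κ ι ℝ)ᵀ) *ᵥ v = t • v})
    (d : κ → ℝ) : ∑ i, (a i ⬝ᵥ d) ^ 2 ≤ σ * (d ⬝ᵥ d) := by
  classical
  have hrows : (of fun j i => a i j : Matrix κ ι ℝ)ᵀ *ᵥ d = fun i => a i ⬝ᵥ d := rfl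
  have := (posSemidef_mul_transpose_self _).isHermitian.dotProduct_mulVec_le hσ d
  rw [dotProduct_mul_transpose_mulVec, hrows] at this
  simp only [sq]
  exact this

noncomputable section GLM

variable {κ : Type*} [Fintype κ] {m : ℕ}

def glmObjective (φ : Fin m → ℝ → ℝ) (a : Fin m → κ → ℝ) (α : ℝ) (x : κ → ℝ) : ℝ :=
  (1 / m) * ∑ i, φ i (a i ⬝ᵥ x) + α / 2 * (x ⬝ᵥ x)

/-- `⟪∇f y, d⟫` for `f = glmObjective φ a α` and `φ' = deriv φ`. -/
def glmGradInner (φ' : Fin m → ℝ → ℝ) (a : Fin m → κ → ℝ) (α : ℝ) (y d : κ → ℝ) : ℝ :=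
  (1 / m) * ∑ i, φ' i (a i ⬝ᵥ y) * (a i ⬝ᵥ d) + α * (y ⬝ᵥ d)

/-- `dᵀ ∇²f(y) d` for `f = glmObjective φ a α` and `φ'' = deriv (deriv φ)`. -/
def glmHessForm (φ'' : Fin m → ℝ → ℝ) (a : Fin m → κ → ℝ) (α : ℝ) (y d : κ → ℝ) : ℝ :=
  (1 / m) * ∑ i, φ'' i (a i ⬝ᵥ y) * (a i ⬝ᵥ d) ^ 2 + α * (d ⬝ᵥ d)

variable {φ φ' φ'' : Fin m → ℝ → ℝ} {a : Fin m → κ → ℝ} {u ℓ : ℝ} (α : ℝ)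

theorem glmHessForm_mem_Icc (hbound : ∀ i t, u ≤ φ'' i t ∧ φ'' i t ≤ ℓ) (y d : κ → ℝ) :
    glmHessForm φ'' a α y d ∈ Set.Icc (u * (∑ i, (a i ⬝ᵥ d) ^ 2) / m + α * (d ⬝ᵥ d))
      (ℓ * (∑ i, (a i ⬝ᵥ d) ^ 2) / m + α * (d ⬝ᵥ d)) := by
  have hlo : u * ∑ i, (a i ⬝ᵥ d) ^ 2 ≤ ∑ i, φ'' i (a i ⬝ᵥ y) * (a i ⬝ᵥ d) ^ 2 := by
    rw [mul_sum]
    gcongr with i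
    exact (hbound i _).1
  have hhi : ∑ i, φ'' i (a i ⬝ᵥ y) * (a i ⬝ᵥ d) ^ 2 ≤ ℓ * ∑ i, (a i ⬝ᵥ d) ^ 2 := by
    rw [mul_sum]
    gcongr with i
    exact (hbound i _).2
  rw [glmHessForm, one_div_mul_eq_div]
  constructor <;> gcongr

theorem two_mul_glmBregman_mem_Icc (hderiv : ∀ i t, HasDerivAt (φ i) (φ' i t) t)
    (hderiv' : ∀ i t, HasDerivAt (φ' i) (φ'' i t) t) (hbound : ∀ i t, u ≤ φ'' i t ∧ φ'' i t ≤ ℓ)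
    (x y : κ → ℝ) :
    2 * (glmObjective φ a α x - glmObjective φ a α y - glmGradInner φ' a α y (x - y)) ∈
      Set.Icc (u * (∑ i, (a i ⬝ᵥ (x - y)) ^ 2) / m + α * ((x - y) ⬝ᵥ (x - y)))
        (ℓ * (∑ i, (a i ⬝ᵥ (x - y)) ^ 2) / m + α * ((x - y) ⬝ᵥ (x - y))) := by
  set T := ∑ i, (φ i (a i ⬝ᵥ x) - φ i (a i ⬝ᵥ y) - φ' i (a i ⬝ᵥ y) * (a i ⬝ᵥ (x - y)))
  have hsq : (x - y) ⬝ᵥ (x - y) = x ⬝ᵥ x - 2 * (y ⬝ᵥ (x - y)) - y ⬝ᵥ y := by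
    simp only [dotProduct_sub, sub_dotProduct, dotProduct_comm x y]
    ring
  have hsplit : 2 * (glmObjective φ a α x - glmObjective φ a α y - glmGradInner φ' a α y (x - y))
      = 2 * T / m + α * ((x - y) ⬝ᵥ (x - y)) := by
    simp only [glmObjective, glmGradInner, T, sum_sub_distrib, hsq]
    ring
  have hlo : u * ∑ i, (a i ⬝ᵥ (x - y)) ^ 2 ≤ 2 * T := by
    rw [mul_sum, mul_sum]
    refine sum_le_sum fun i _ => ?_
    have := mul_sq_div_two_le_of_le_deriv2 (hderiv i) (hderiv' i) (fun t => (hbound i t).1)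
      (a i ⬝ᵥ y) (a i ⬝ᵥ x)
    rw [dotProduct_sub]
    linarith
  have hhi : 2 * T ≤ ℓ * ∑ i, (a i ⬝ᵥ (x - y)) ^ 2 := by
    rw [mul_sum, mul_sum]
    refine sum_le_sum fun i _ => ?_
    have := sub_sub_mul_le_of_deriv2_le (hderiv i) (hderiv' i) (fun t => (hbound i t).2)
      (a i ⬝ᵥ y) (a i ⬝ᵥ x)
    rw [dotProduct_sub]
    linarith
  rw [hsplit]
  constructor <;> gcongr

end GLM

section ConditionNumber

variable {u ℓ σ m α S D : ℝ} (hu : 0 ≤ u) (huℓ : u ≤ ℓ) (hσ : 0 ≤ σ) (hm : 0 < m) (hα : 0 < α)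
  (hSD : S ≤ σ * D)
include hu huℓ hσ hm hα hSD

theorem mul_le_mul_of_le_upper_of_lower_le {p q : ℝ} (hp : p ≤ ℓ * S / m + α * D)
    (hq : u * S / m + α * D ≤ q) : (u * σ + m * α) * p ≤ (ℓ * σ + m * α) * q := by
  have hℓ : 0 ≤ ℓ := hu.trans huℓ
  have hmα : 0 < m * α := mul_pos hm hα
  -- the endpoint ratio `(ℓ S + m α D) / (u S + m α D)` increases with `S ≤ σ D`
  have hends : (u * σ + m * α) * (ℓ * S + m * α * D) ≤ (ℓ * σ + m * α) * (u * S + m * α * D) := by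
    linarith [mul_nonneg (mul_nonneg hmα.le (sub_nonneg.2 huℓ)) (sub_nonneg.2 hSD)]
  calc (u * σ + m * α) * p ≤ (u * σ + m * α) * (ℓ * S / m + α * D) := by gcongr
    _ = (u * σ + m * α) * (ℓ * S + m * α * D) / m := by field_simp
    _ ≤ (ℓ * σ + m * α) * (u * S + m * α * D) / m := by gcongr
    _ = (ℓ * σ + m * α) * (u * S / m + α * D) := by field_simp
    _ ≤ (ℓ * σ + m * α) * q := by gcongr

theorem relative_bounds_of_mem_Icc {R Q : ℝ}
    (hR : 2 * R ∈ Set.Icc (u * S / m + α * D) (ℓ * S / m + α * D))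
    (hQ : Q ∈ Set.Icc (u * S / m + α * D) (ℓ * S / m + α * D)) :
    (u * σ + m * α) / (ℓ * σ + m * α) / 2 * Q ≤ R ∧
      R ≤ (ℓ * σ + m * α) / (u * σ + m * α) / 2 * Q := by
  have hlo := mul_le_mul_of_le_upper_of_lower_le hu huℓ hσ hm hα hSD hQ.2 hR.1
  have hhi := mul_le_mul_of_le_upper_of_lower_le hu huℓ hσ hm hα hSD hR.2 hQ.1
  have hℓ : 0 ≤ ℓ := hu.trans huℓ
  constructor
  · rw [div_div, div_mul_eq_mul_div, div_le_iff₀ (by positivity)]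
    linarith
  · rw [div_div, div_mul_eq_mul_div, le_div_iff₀ (by positivity)]
    linarith

end ConditionNumber

/-- Relative smoothness/convexity constants for generalized linear models. -/
theorem glm_relative_smoothness_convexity {n m : ℕ} (hm : 0 < m)
    (a : Fin m → (Fin n → ℝ)) (φ φ' φ'' : Fin m → ℝ → ℝ)
    (u ℓ α : ℝ) (hu : 0 ≤ u) (huℓ : u ≤ ℓ) (hα : 0 < α)
    (hderiv : ∀ i t, HasDerivAt (φ i) (φ' i t) t)
    (hderiv' : ∀ i t, HasDerivAt (φ' i) (φ'' i t) t)
    (hbound : ∀ i t, u ≤ φ'' i t ∧ φ'' i t ≤ ℓ)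
    (smax2 : ℝ)
    (hsmax : IsGreatest {t : ℝ | ∃ v : Fin n → ℝ, v ≠ 0 ∧
      ((Matrix.of fun j i => a i j : Matrix (Fin n) (Fin m) ℝ) *
        (Matrix.of fun j i => a i j : Matrix (Fin n) (Fin m) ℝ)ᵀ).mulVec v = t • v} smax2) :
    ∀ x y : Fin n → ℝ,
      ((u * smax2 + m * α) / (ℓ * smax2 + m * α)) / 2 *
          ((1 / m) * ∑ i, φ'' i (a i ⬝ᵥ y) * (a i ⬝ᵥ (x - y)) ^ 2 + α * ((x - y) ⬝ᵥ (x - y))) ≤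
        ((1 / m) * ∑ i, φ i (a i ⬝ᵥ x) + α / 2 * (x ⬝ᵥ x)) -
          ((1 / m) * ∑ i, φ i (a i ⬝ᵥ y) + α / 2 * (y ⬝ᵥ y)) -
          ((1 / m) * ∑ i, φ' i (a i ⬝ᵥ y) * (a i ⬝ᵥ (x - y)) + α * (y ⬝ᵥ (x - y))) ∧
      ((1 / m) * ∑ i, φ i (a i ⬝ᵥ x) + α / 2 * (x ⬝ᵥ x)) -
          ((1 / m) * ∑ i, φ i (a i ⬝ᵥ y) + α / 2 * (y ⬝ᵥ y)) -
          ((1 / m) * ∑ i, φ' i (a i ⬝ᵥ y) * (a i ⬝ᵥ (x - y)) + α * (y ⬝ᵥ (x - y))) ≤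
        ((ℓ * smax2 + m * α) / (u * smax2 + m * α)) / 2 *
          ((1 / m) * ∑ i, φ'' i (a i ⬝ᵥ y) * (a i ⬝ᵥ (x - y)) ^ 2 + α * ((x - y) ⬝ᵥ (x - y))) := by
  intro x y
  have hσ : 0 ≤ smax2 := by
    obtain ⟨v, hv, hveq⟩ := hsmax.1
    exact (posSemidef_mul_transpose_self _).nonneg_of_mulVec_eq_smul hv hveq
  exact relative_bounds_of_mem_Icc hu huℓ hσ (by exact_mod_cast hm) hα
    (sum_sq_dotProduct_le hsmax.2 (x - y))
    (two_mul_glmBregman_mem_Icc α hderiv hderiv' hbound x y)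
    (glmHessForm_mem_Icc α hbound y (x - y))
end
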